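/- Let H be a separable complex Hilbert space, U : ℝ → U(H) a strongly continuous unitary representation, 𝒫 = {a*a : a ∈ B(H), C_a < ∞} and 𝒟 = span_ℂ 𝒫. For x ∈ 𝒟 define ‖x‖_𝒟 := sup_{‖ψ‖=1} ∫_ℝ |⟨ψ, U(t) x U(t)* ψ⟩| dt. Then: (i) ‖x‖_𝒟 < ∞ for every x ∈ 𝒟; (ii) ‖·‖_𝒟 is a norm on 𝒟 (subadditive, absolutely homogeneous, and ‖x‖_𝒟 = 0 implies x = 0); (iii) ‖x*‖_𝒟 = ‖x‖_𝒟; (iv) ‖a*a‖_𝒟 = C_a² for every a*a ∈ 𝒫; and (v) for all x, y ∈ 𝒟 and t ∈ ℝ, the operator y U(t) x U(t)* lies in 𝒟 and ‖y U(t) x U(t)*‖_𝒟 ≤ C_{y*} · C_x. -/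

import Mathlib

/-!
For `ψ_t := U(t)* ψ` one has `⟨ψ, U(t) x U(t)* ψ⟩ = ⟨ψ_t, x ψ_t⟩`, so `‖a*a‖_𝒟 = C_a²` holds
integrand by integrand, and Cauchy–Schwarz in `H` followed by Cauchy–Schwarz in `L²(ℝ)` gives
`‖y x‖_𝒟 ≤ C_{y*} C_x`. Translation invariance of Lebesgue measure gives `C_{a U(t)*} = C_a`,
and `C_{u a} = C_a` for unitary `u`. With the polarization identity
`c* d = ¼ ∑ iᵏ (d + iᵏ c)* (d + iᵏ c)` and `C_{c+d}² ≤ 2 (C_c² + C_d²)` this shows that `𝒟` is an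
algebra stable under conjugation by `U(t)`. Definiteness: if `‖x‖_𝒟 = 0`, the continuous
integrand vanishes identically, in particular at `t = 0`, so the quadratic form of `x` vanishes
and hence `x = 0`.
-/

open MeasureTheory
open scoped ENNReal NNReal

local notation "⟪" x ", " y "⟫_ℂ" => @inner ℂ _ _ x y

noncomputable section

/-- `Csq U a` is the square `C_a²` of the constant
`C_a = (sup_{‖ψ‖=1} ∫_ℝ ‖a U(t)* ψ‖² dt)^{1/2} ∈ [0,∞]`. -/
def Csq {H : Type*} [NormedAddCommGroup H] [InnerProductSpace ℂ H] [CompleteSpace H]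
    (U : ℝ → (H →L[ℂ] H)) (a : H →L[ℂ] H) : ℝ≥0∞ :=
  ⨆ ψ : {ψ : H // ‖ψ‖ = 1}, ∫⁻ t : ℝ, (‖a (star (U t) (ψ : H))‖₊ : ℝ≥0∞) ^ 2

/-- The set `𝒫 = {a*a : C_a < ∞}` of positive `t`-integrable operators. -/
def posTIntegrable {H : Type*} [NormedAddCommGroup H] [InnerProductSpace ℂ H] [CompleteSpace H]
    (U : ℝ → (H →L[ℂ] H)) : Set (H →L[ℂ] H) :=
  {x | ∃ a : H →L[ℂ] H, Csq U a ≠ ⊤ ∧ x = star a * a}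

/-- The `𝒟`-norm `‖x‖_𝒟 = sup_{‖ψ‖=1} ∫_ℝ |⟨ψ, U(t) x U(t)* ψ⟩| dt`, valued in `[0,∞]`. -/
def Dnorm {H : Type*} [NormedAddCommGroup H] [InnerProductSpace ℂ H] [CompleteSpace H]
    (U : ℝ → (H →L[ℂ] H)) (x : H →L[ℂ] H) : ℝ≥0∞ :=
  ⨆ ψ : {ψ : H // ‖ψ‖ = 1},
    ∫⁻ t : ℝ, (‖⟪(ψ : H), (U t * x * star (U t)) (ψ : H)⟫_ℂ‖₊ : ℝ≥0∞)

lemma star_mul_eq_polarization {A : Type*} [Ring A] [StarRing A] [Algebra ℂ A] [StarModule ℂ A]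
    (c d : A) :
    star c * d = (4 : ℂ)⁻¹ • ∑ k ∈ Finset.range 4,
      Complex.I ^ k • (star (d + Complex.I ^ k • c) * (d + Complex.I ^ k • c)) := by
  have hI3 : Complex.I ^ 3 = -Complex.I := by rw [pow_succ, Complex.I_sq, neg_one_mul]
  simp only [Finset.sum_range_succ, Finset.sum_range_zero, zero_add, pow_zero, pow_one,
    Complex.I_sq, hI3, one_smul, neg_smul, star_add, star_smul, map_one, Complex.star_def,
    Complex.conj_I, map_neg, mul_add, add_mul, smul_add, smul_smul, smul_mul_assoc,
    mul_smul_comm, Complex.I_mul_I, neg_neg, mul_one, neg_mul, mul_neg]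
  module

lemma ContinuousLinearMap.eq_zero_of_inner_apply_self_eq_zero {H : Type*}
    [NormedAddCommGroup H] [InnerProductSpace ℂ H] {x : H →L[ℂ] H}
    (h : ∀ ψ : H, ‖ψ‖ = 1 → ⟪ψ, x ψ⟫_ℂ = 0) : x = 0 := by
  have hform : ∀ v : H, ⟪(x : H →ₗ[ℂ] H) v, v⟫_ℂ = 0 := by
    intro v
    rcases eq_or_ne v 0 with rfl | hv
    · simp
    have hunit := h _ (norm_smul_inv_norm (𝕜 := ℂ) hv)
    rw [map_smul, inner_smul_left, inner_smul_right] at hunit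
    have hv' : ⟪v, x v⟫_ℂ = 0 := by simpa [hv] using hunit
    rw [coe_coe, ← inner_conj_symm, hv', map_zero]
  exact coe_injective ((inner_map_self_eq_zero _).1 hform)

section

variable {H : Type*} [NormedAddCommGroup H] [InnerProductSpace ℂ H] [CompleteSpace H]
  {U : ℝ → (H →L[ℂ] H)}

lemma inner_mul_mul_star_apply (u x : H →L[ℂ] H) (ψ : H) :
    ⟪ψ, (u * x * star u) ψ⟫_ℂ = ⟪star u ψ, x (star u ψ)⟫_ℂ := by
  rw [u.star_eq_adjoint]
  exact (u.adjoint_inner_left _ _).symm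

lemma lintegral_le_Csq (a : H →L[ℂ] H) {ψ : H} (hψ : ‖ψ‖ = 1) :
    ∫⁻ t : ℝ, (‖a (star (U t) ψ)‖₊ : ℝ≥0∞) ^ 2 ≤ Csq U a :=
  le_iSup (fun ψ : {ψ : H // ‖ψ‖ = 1} => ∫⁻ t : ℝ, (‖a (star (U t) (ψ : H))‖₊ : ℝ≥0∞) ^ 2)
    ⟨ψ, hψ⟩

lemma lintegral_le_Dnorm (x : H →L[ℂ] H) {ψ : H} (hψ : ‖ψ‖ = 1) :
    ∫⁻ t : ℝ, (‖⟪ψ, (U t * x * star (U t)) ψ⟫_ℂ‖₊ : ℝ≥0∞) ≤ Dnorm U x :=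
  le_iSup (fun ψ : {ψ : H // ‖ψ‖ = 1} =>
    ∫⁻ t : ℝ, (‖⟪(ψ : H), (U t * x * star (U t)) (ψ : H)⟫_ℂ‖₊ : ℝ≥0∞)) ⟨ψ, hψ⟩

lemma Dnorm_star (x : H →L[ℂ] H) : Dnorm U (star x) = Dnorm U x := by
  unfold Dnorm
  congr! 4 with ψ t
  rw [inner_mul_mul_star_apply, inner_mul_mul_star_apply, x.star_eq_adjoint,
    ContinuousLinearMap.adjoint_inner_right, ← inner_conj_symm, RCLike.nnnorm_conj]

lemma Dnorm_star_mul_self (a : H →L[ℂ] H) : Dnorm U (star a * a) = Csq U a := by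
  unfold Dnorm Csq
  congr! 4 with ψ t
  rw [inner_mul_mul_star_apply, mul_apply_eq_comp, a.star_eq_adjoint,
    ContinuousLinearMap.adjoint_inner_right, inner_self_eq_norm_sq_to_K]
  simp [← Complex.ofReal_pow, Complex.nnnorm_real, nnnorm_pow, nnnorm_norm]

lemma Dnorm_smul (c : ℂ) (x : H →L[ℂ] H) : Dnorm U (c • x) = ‖c‖₊ * Dnorm U x := by
  unfold Dnorm
  rw [ENNReal.mul_iSup]
  congr 1; ext ψ
  rw [← lintegral_const_mul' _ _ ENNReal.coe_ne_top]
  congr 1; ext t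
  simp only [mul_smul_comm, smul_mul_assoc, smul_apply, inner_smul_right,
    nnnorm_mul, ENNReal.coe_mul]

lemma Csq_smul (c : ℂ) (a : H →L[ℂ] H) : Csq U (c • a) = ‖c‖₊ ^ 2 * Csq U a := by
  unfold Csq
  rw [ENNReal.mul_iSup]
  congr 1; ext ψ
  rw [← lintegral_const_mul' _ _ (ENNReal.pow_ne_top ENNReal.coe_ne_top)]
  congr 1; ext t
  simp only [smul_apply, nnnorm_smul, ENNReal.coe_mul, mul_pow]

lemma Csq_mul_le (e a : H →L[ℂ] H) : Csq U (e * a) ≤ ‖e‖₊ ^ 2 * Csq U a := by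
  unfold Csq
  rw [ENNReal.mul_iSup]
  refine iSup_mono fun ψ => ?_
  rw [← lintegral_const_mul' _ _ (ENNReal.pow_ne_top ENNReal.coe_ne_top)]
  refine lintegral_mono fun t => ?_
  rw [← mul_pow]
  gcongr
  exact_mod_cast e.le_opNNNorm _

lemma Csq_mul_of_norm_map {e : H →L[ℂ] H} (he : ∀ v, ‖e v‖ = ‖v‖) (a : H →L[ℂ] H) :
    Csq U (e * a) = Csq U a := by
  unfold Csq
  have he' : ∀ v, ‖e v‖₊ = ‖v‖₊ := fun v => NNReal.eq (he v)
  simp only [mul_apply_eq_comp, he']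

section Translation

variable (hUadd : ∀ s t : ℝ, U (s + t) = U s * U t)
include hUadd

lemma Csq_mul_star_U (a : H →L[ℂ] H) (t : ℝ) : Csq U (a * star (U t)) = Csq U a := by
  unfold Csq
  congr 1; ext ψ
  have hshift : ∀ s, (a * star (U t)) (star (U s) ψ) = a (star (U (s + t)) ψ) := fun s => by
    rw [hUadd, star_mul]; rfl
  simp only [hshift]
  exact lintegral_add_right_eq_self (fun s => (‖a (star (U s) (ψ : H))‖₊ : ℝ≥0∞) ^ 2) t

lemma Csq_conj (hUuni : ∀ t : ℝ, U t ∈ unitary (H →L[ℂ] H)) (x : H →L[ℂ] H) (t : ℝ) :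
    Csq U (U t * x * star (U t)) = Csq U x := by
  rw [mul_assoc, Csq_mul_of_norm_map (ContinuousLinearMap.norm_map_of_mem_unitary (hUuni t)),
    Csq_mul_star_U hUadd]

lemma conj_mem_span_posTIntegrable {x : H →L[ℂ] H}
    (hx : x ∈ Submodule.span ℂ (posTIntegrable U)) (t : ℝ) :
    U t * x * star (U t) ∈ Submodule.span ℂ (posTIntegrable U) := by
  induction hx using Submodule.span_induction with
  | mem p hp =>
    obtain ⟨a, ha, rfl⟩ := hp
    refine Submodule.subset_span ⟨a * star (U t), (Csq_mul_star_U hUadd a t).symm ▸ ha, ?_⟩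
    simp only [star_mul, star_star, mul_assoc]
  | zero => simp
  | add x y _ _ hx hy =>
    rw [mul_add, add_mul]
    exact Submodule.add_mem _ hx hy
  | smul c x _ hx =>
    rw [mul_smul_comm, smul_mul_assoc]
    exact Submodule.smul_mem _ _ hx

end Translation

section StronglyContinuous

variable (hUadd : ∀ s t : ℝ, U (s + t) = U s * U t)
  (hUuni : ∀ t : ℝ, U t ∈ unitary (H →L[ℂ] H))
  (hUcont : ∀ ψ : H, Continuous fun t : ℝ => U t ψ)

section Group

include hUadd hUuni

lemma U_zero : U 0 = 1 := by
  have hidem : U 0 * U 0 = U 0 := by rw [← hUadd, add_zero]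
  calc U 0 = star (U 0) * U 0 * U 0 := by rw [Unitary.star_mul_self_of_mem (hUuni 0), one_mul]
    _ = 1 := by rw [mul_assoc, hidem, Unitary.star_mul_self_of_mem (hUuni 0)]

lemma star_U (t : ℝ) : star (U t) = U (-t) := by
  calc star (U t) = star (U t) * (U t * U (-t)) := by
        rw [← hUadd, add_neg_cancel, U_zero hUadd hUuni, mul_one]
    _ = U (-t) := by rw [← mul_assoc, Unitary.star_mul_self_of_mem (hUuni t), one_mul]

end Group

include hUadd hUuni hUcont

lemma continuous_star_U_apply (ψ : H) : Continuous fun t : ℝ => star (U t) ψ := by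
  simp only [star_U hUadd hUuni]
  exact (hUcont ψ).comp continuous_neg

lemma continuous_nnnorm_inner_conj (x : H →L[ℂ] H) (ψ : H) :
    Continuous fun t : ℝ => (‖⟪ψ, (U t * x * star (U t)) ψ⟫_ℂ‖₊ : ℝ≥0∞) := by
  have := continuous_star_U_apply hUadd hUuni hUcont ψ
  simp only [inner_mul_mul_star_apply]
  fun_prop

lemma continuous_nnnorm_apply_star_U (a : H →L[ℂ] H) (ψ : H) :
    Continuous fun t : ℝ => (‖a (star (U t) ψ)‖₊ : ℝ≥0∞) := by
  have := continuous_star_U_apply hUadd hUuni hUcont ψ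
  fun_prop

lemma Dnorm_add_le (x y : H →L[ℂ] H) : Dnorm U (x + y) ≤ Dnorm U x + Dnorm U y := by
  refine iSup_le fun ψ => ?_
  calc ∫⁻ t : ℝ, (‖⟪(ψ : H), (U t * (x + y) * star (U t)) ψ⟫_ℂ‖₊ : ℝ≥0∞)
      ≤ ∫⁻ t : ℝ, ((‖⟪(ψ : H), (U t * x * star (U t)) ψ⟫_ℂ‖₊ : ℝ≥0∞)
          + ‖⟪(ψ : H), (U t * y * star (U t)) ψ⟫_ℂ‖₊) := by
        refine lintegral_mono fun t => ?_
        rw [mul_add, add_mul, add_apply, inner_add_right, ← ENNReal.coe_add]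
        exact ENNReal.coe_le_coe.2 (nnnorm_add_le _ _)
    _ = (∫⁻ t : ℝ, (‖⟪(ψ : H), (U t * x * star (U t)) ψ⟫_ℂ‖₊ : ℝ≥0∞))
          + ∫⁻ t : ℝ, (‖⟪(ψ : H), (U t * y * star (U t)) ψ⟫_ℂ‖₊ : ℝ≥0∞) :=
        lintegral_add_left (continuous_nnnorm_inner_conj hUadd hUuni hUcont x ψ).measurable _
    _ ≤ Dnorm U x + Dnorm U y := add_le_add (lintegral_le_Dnorm x ψ.2) (lintegral_le_Dnorm y ψ.2)

lemma Csq_add_le (c d : H →L[ℂ] H) : Csq U (c + d) ≤ 2 * (Csq U c + Csq U d) := by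
  refine iSup_le fun ψ => ?_
  calc ∫⁻ t : ℝ, (‖(c + d) (star (U t) ψ)‖₊ : ℝ≥0∞) ^ 2
      ≤ ∫⁻ t : ℝ, 2 * ((‖c (star (U t) ψ)‖₊ : ℝ≥0∞) ^ 2 + (‖d (star (U t) ψ)‖₊ : ℝ≥0∞) ^ 2) := by
        refine lintegral_mono fun t => ?_
        have hsq : ‖c (star (U t) ψ) + d (star (U t) ψ)‖₊ ^ 2
            ≤ 2 * (‖c (star (U t) ψ)‖₊ ^ 2 + ‖d (star (U t) ψ)‖₊ ^ 2) :=
          (pow_le_pow_left₀ zero_le (nnnorm_add_le _ _) 2).trans add_sq_le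
        have hsq' := ENNReal.coe_le_coe.2 hsq
        push_cast at hsq'
        rwa [add_apply]
    _ = 2 * ((∫⁻ t : ℝ, (‖c (star (U t) ψ)‖₊ : ℝ≥0∞) ^ 2)
          + ∫⁻ t : ℝ, (‖d (star (U t) ψ)‖₊ : ℝ≥0∞) ^ 2) := by
        rw [lintegral_const_mul' _ _ ENNReal.ofNat_ne_top, lintegral_add_left
          ((continuous_nnnorm_apply_star_U hUadd hUuni hUcont c ψ).measurable.pow_const 2)]
    _ ≤ 2 * (Csq U c + Csq U d) := by
        gcongr <;> exact lintegral_le_Csq _ ψ.2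

lemma Dnorm_mul_le (x y : H →L[ℂ] H) :
    Dnorm U (y * x) ≤ Csq U (star y) ^ (1 / 2 : ℝ) * Csq U x ^ (1 / 2 : ℝ) := by
  refine iSup_le fun ψ => ?_
  calc ∫⁻ t : ℝ, (‖⟪(ψ : H), (U t * (y * x) * star (U t)) ψ⟫_ℂ‖₊ : ℝ≥0∞)
      ≤ ∫⁻ t : ℝ, (‖star y (star (U t) ψ)‖₊ : ℝ≥0∞) * ‖x (star (U t) ψ)‖₊ := by
        refine lintegral_mono fun t => ?_
        rw [inner_mul_mul_star_apply, mul_apply_eq_comp, y.star_eq_adjoint,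
          ← ContinuousLinearMap.adjoint_inner_left, ← ENNReal.coe_mul]
        exact ENNReal.coe_le_coe.2 (nnnorm_inner_le_nnnorm _ _)
    _ ≤ (∫⁻ t : ℝ, (‖star y (star (U t) ψ)‖₊ : ℝ≥0∞) ^ (2 : ℝ)) ^ (1 / 2 : ℝ)
          * (∫⁻ t : ℝ, (‖x (star (U t) ψ)‖₊ : ℝ≥0∞) ^ (2 : ℝ)) ^ (1 / 2 : ℝ) :=
        ENNReal.lintegral_mul_le_Lp_mul_Lq volume .two_two
          (continuous_nnnorm_apply_star_U hUadd hUuni hUcont _ _).aemeasurable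
          (continuous_nnnorm_apply_star_U hUadd hUuni hUcont _ _).aemeasurable
    _ ≤ Csq U (star y) ^ (1 / 2 : ℝ) * Csq U x ^ (1 / 2 : ℝ) := by
        simp only [ENNReal.rpow_two]
        gcongr <;> exact lintegral_le_Csq _ ψ.2

lemma Dnorm_eq_zero {x : H →L[ℂ] H} (h : Dnorm U x = 0) : x = 0 := by
  refine ContinuousLinearMap.eq_zero_of_inner_apply_self_eq_zero fun ψ hψ => ?_
  have hint : ∫⁻ t : ℝ, (‖⟪ψ, (U t * x * star (U t)) ψ⟫_ℂ‖₊ : ℝ≥0∞) = 0 :=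
    nonpos_iff_eq_zero.1 (h ▸ lintegral_le_Dnorm x hψ)
  have hzero := congrFun ((lintegral_eq_zero_of_isAddLeftInvariant
    (continuous_nnnorm_inner_conj hUadd hUuni hUcont x ψ)).1 hint) 0
  simpa [U_zero hUadd hUuni] using hzero

lemma Dnorm_ne_top_of_mem_span {x : H →L[ℂ] H}
    (hx : x ∈ Submodule.span ℂ (posTIntegrable U)) : Dnorm U x ≠ ⊤ := by
  induction hx using Submodule.span_induction with
  | mem p hp =>
    obtain ⟨a, ha, rfl⟩ := hp
    rwa [Dnorm_star_mul_self]
  | zero => simp [Dnorm]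
  | add x y _ _ hx hy =>
    exact ne_top_of_le_ne_top (ENNReal.add_ne_top.2 ⟨hx, hy⟩)
      (Dnorm_add_le hUadd hUuni hUcont x y)
  | smul c x _ hx =>
    rw [Dnorm_smul]
    exact ENNReal.mul_ne_top ENNReal.coe_ne_top hx

lemma star_mul_mem_span_posTIntegrable {c d : H →L[ℂ] H} (hc : Csq U c ≠ ⊤) (hd : Csq U d ≠ ⊤) :
    star c * d ∈ Submodule.span ℂ (posTIntegrable U) := by
  rw [star_mul_eq_polarization c d]
  refine Submodule.smul_mem _ _ (Submodule.sum_mem _ fun k _ => Submodule.smul_mem _ _ ?_)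
  refine Submodule.subset_span ⟨d + Complex.I ^ k • c, ?_, rfl⟩
  refine ne_top_of_le_ne_top ?_ (Csq_add_le hUadd hUuni hUcont _ _)
  rw [Csq_smul]
  finiteness

lemma mul_mem_span_posTIntegrable {x y : H →L[ℂ] H}
    (hx : x ∈ Submodule.span ℂ (posTIntegrable U)) (hy : y ∈ Submodule.span ℂ (posTIntegrable U)) :
    x * y ∈ Submodule.span ℂ (posTIntegrable U) := by
  induction hx, hy using Submodule.span_induction₂ with
  | mem_mem p q hp hq =>
    obtain ⟨b, hb, rfl⟩ := hp
    obtain ⟨a, ha, rfl⟩ := hq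
    -- `b*b a*a = b* ((b a*) a)`
    rw [mul_assoc]
    refine star_mul_mem_span_posTIntegrable hUadd hUuni hUcont hb ?_
    rw [← mul_assoc]
    exact ne_top_of_le_ne_top (by finiteness) (Csq_mul_le _ _)
  | zero_left q _ => rw [zero_mul]; exact Submodule.zero_mem _
  | zero_right p _ => rw [mul_zero]; exact Submodule.zero_mem _
  | add_left x y z _ _ _ hx hy => rw [add_mul]; exact Submodule.add_mem _ hx hy
  | add_right x y z _ _ _ hx hy => rw [mul_add]; exact Submodule.add_mem _ hx hy
  | smul_left c x y _ _ h => rw [smul_mul_assoc]; exact Submodule.smul_mem _ _ h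
  | smul_right c x y _ _ h => rw [mul_smul_comm]; exact Submodule.smul_mem _ _ h

end StronglyContinuous

end

theorem stmt13_general {H : Type*}
    [NormedAddCommGroup H] [InnerProductSpace ℂ H] [CompleteSpace H]
    (U : ℝ → (H →L[ℂ] H))
    (hUadd : ∀ s t : ℝ, U (s + t) = U s * U t)
    (hUuni : ∀ t : ℝ, U t ∈ unitary (H →L[ℂ] H))
    (hUcont : ∀ ψ : H, Continuous fun t : ℝ => U t ψ) :
    (∀ x ∈ Submodule.span ℂ (posTIntegrable U), Dnorm U x ≠ ⊤) ∧
    (∀ x ∈ Submodule.span ℂ (posTIntegrable U), ∀ y ∈ Submodule.span ℂ (posTIntegrable U),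
        Dnorm U (x + y) ≤ Dnorm U x + Dnorm U y) ∧
    (∀ c : ℂ, ∀ x ∈ Submodule.span ℂ (posTIntegrable U),
        Dnorm U (c • x) = (‖c‖₊ : ℝ≥0∞) * Dnorm U x) ∧
    (∀ x ∈ Submodule.span ℂ (posTIntegrable U), Dnorm U x = 0 → x = 0) ∧
    (∀ x : H →L[ℂ] H, Dnorm U (star x) = Dnorm U x) ∧
    (∀ a : H →L[ℂ] H, Csq U a ≠ ⊤ → Dnorm U (star a * a) = Csq U a) ∧
    (∀ x ∈ Submodule.span ℂ (posTIntegrable U), ∀ y ∈ Submodule.span ℂ (posTIntegrable U),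
        ∀ t : ℝ, y * (U t * x * star (U t)) ∈ Submodule.span ℂ (posTIntegrable U) ∧
          Dnorm U (y * (U t * x * star (U t)))
            ≤ Csq U (star y) ^ (1 / 2 : ℝ) * Csq U x ^ (1 / 2 : ℝ)) := by
  refine ⟨fun x hx => Dnorm_ne_top_of_mem_span hUadd hUuni hUcont hx,
    fun x _ y _ => Dnorm_add_le hUadd hUuni hUcont x y,
    fun c x _ => Dnorm_smul c x,
    fun x _ h => Dnorm_eq_zero hUadd hUuni hUcont h,
    Dnorm_star,
    fun a _ => Dnorm_star_mul_self a,
    fun x hx y hy t => ⟨?_, ?_⟩⟩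
  · exact mul_mem_span_posTIntegrable hUadd hUuni hUcont hy
      (conj_mem_span_posTIntegrable hUadd hx t)
  · rw [← Csq_conj hUadd hUuni x t]
    exact Dnorm_mul_le hUadd hUuni hUcont _ y

/-- For a strongly continuous unitary one-parameter group `U` on a separable
complex Hilbert space, the quantity `‖·‖_𝒟` is finite on `𝒟 = span ℂ 𝒫` and defines a norm
there: it is subadditive, absolutely homogeneous and definite; it is *-invariant; it satisfies
`‖a*a‖_𝒟 = C_a²`; and for `x, y ∈ 𝒟` and `t ∈ ℝ` the operator `y U(t) x U(t)*` lies in `𝒟`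
with `‖y U(t) x U(t)*‖_𝒟 ≤ C_{y*} C_x`. -/
theorem stmt13 {H : Type*}
    [NormedAddCommGroup H] [InnerProductSpace ℂ H] [CompleteSpace H] [SecondCountableTopology H]
    (U : ℝ → (H →L[ℂ] H))
    (hU0 : U 0 = 1) (hUadd : ∀ s t : ℝ, U (s + t) = U s * U t)
    (hUuni : ∀ t : ℝ, U t ∈ unitary (H →L[ℂ] H))
    (hUcont : ∀ ψ : H, Continuous fun t : ℝ => U t ψ) :
    (∀ x ∈ Submodule.span ℂ (posTIntegrable U), Dnorm U x ≠ ⊤) ∧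
    (∀ x ∈ Submodule.span ℂ (posTIntegrable U), ∀ y ∈ Submodule.span ℂ (posTIntegrable U),
        Dnorm U (x + y) ≤ Dnorm U x + Dnorm U y) ∧
    (∀ c : ℂ, ∀ x ∈ Submodule.span ℂ (posTIntegrable U),
        Dnorm U (c • x) = (‖c‖₊ : ℝ≥0∞) * Dnorm U x) ∧
    (∀ x ∈ Submodule.span ℂ (posTIntegrable U), Dnorm U x = 0 → x = 0) ∧
    (∀ x : H →L[ℂ] H, Dnorm U (star x) = Dnorm U x) ∧
    (∀ a : H →L[ℂ] H, Csq U a ≠ ⊤ → Dnorm U (star a * a) = Csq U a) ∧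
    (∀ x ∈ Submodule.span ℂ (posTIntegrable U), ∀ y ∈ Submodule.span ℂ (posTIntegrable U),
        ∀ t : ℝ, y * (U t * x * star (U t)) ∈ Submodule.span ℂ (posTIntegrable U) ∧
          Dnorm U (y * (U t * x * star (U t)))
            ≤ Csq U (star y) ^ (1 / 2 : ℝ) * Csq U x ^ (1 / 2 : ℝ)) :=
  stmt13_general U hUadd hUuni hUcont

end
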